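/- arXiv:2402.01129 — 2 statements merged into one kernel-verified Lean document; each statement's English description precedes it below -/
import Mathlib

section
/- For integers a, b, c, d, e, f ≥ 2, the 3-braid β = σ_1^a σ_2^b σ_1^c σ_2^d σ_1^e σ_2^f is a positive braid with fractional Dehn twist coefficient c(β) > 1, yet β does not contain a full twist (i.e., Δ^{−2}β is not a positive braid, where Δ² = (σ_1σ_2)³). -/
/-!
Writing `Δ² = σ₁σ₂²σ₁σ₂²` and inserting two letters `σ₁` gives `(σ₁²σ₂²)²`, so monotonicity
and homogeneity give `c(σ₁²σ₂²) ≥ 1/2`; since `β` arises from `(σ₁²σ₂²)³` by inserting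
generators, `c(β) ≥ 3/2`.

For the full twist, map `B₃` onto `ℤ/2 ∗ ℤ/3` by `σ₁ ↦ x y`, `σ₂ ↦ y x`; this kills `Δ²`.
Left multiplication by a letter adds at most one `ℤ/3`-letter to a reduced word, so the image
of a positive braid has at most as many `ℤ/3`-letters as the braid has crossings. The image of
`β` is reduced to `x (y x)^(a-1) y² x (y x)^(b-2) y² x ⋯ y² x (y x)^(f-1)`, with
`a + b + c + d + e + f - 5` letters `y^±1`, while `Δ⁻²β` would have only
`a + b + c + d + e + f - 6` crossings.
-/
/-! Braid groups via the Artin presentation. `BraidGroup n` is the braid group `B_n`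
on `n` strands, with Artin generators `braidGen i` (`σ_{i+1}`) for `i : Fin (n-1)`. -/

/-- The Artin relations of the braid group `B_n`. -/
def braidRels (n : ℕ) : Set (FreeGroup (Fin (n - 1))) :=
  {r | (∃ i j : Fin (n - 1), (i : ℕ) + 2 ≤ (j : ℕ) ∧
          r = FreeGroup.of i * FreeGroup.of j * (FreeGroup.of i)⁻¹ * (FreeGroup.of j)⁻¹) ∨
       (∃ i j : Fin (n - 1), (i : ℕ) + 1 = (j : ℕ) ∧
          r = FreeGroup.of i * FreeGroup.of j * FreeGroup.of i *
              (FreeGroup.of j)⁻¹ * (FreeGroup.of i)⁻¹ * (FreeGroup.of j)⁻¹)}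

/-- The braid group `B_n` on `n` strands. -/
def BraidGroup (n : ℕ) : Type := PresentedGroup (braidRels n)

instance (n : ℕ) : Group (BraidGroup n) :=
  inferInstanceAs (Group (PresentedGroup (braidRels n)))

/-- The Artin generator `σ_{i+1}` of `B_n`. -/
def braidGen {n : ℕ} (i : Fin (n - 1)) : BraidGroup n := PresentedGroup.of i

/-- A braid is positive if it is a product of positive Artin generators. -/
def IsPositiveBraid {n : ℕ} (β : BraidGroup n) : Prop :=
  β ∈ Submonoid.closure (Set.range (braidGen (n := n)))

/-- The full twist `Δ² = (σ_1 σ_2 ⋯ σ_{n-1})^n ∈ B_n`. -/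
def fullTwist (n : ℕ) : BraidGroup n :=
  ((List.ofFn fun i : Fin (n - 1) => braidGen i).prod) ^ n

/-- A braid `β ∈ B_n` contains at least `k` full twists if `Δ^{-2k} β` is a positive braid. -/
def ContainsFullTwists {n : ℕ} (k : ℤ) (β : BraidGroup n) : Prop :=
  IsPositiveBraid (fullTwist n ^ (-k) * β)

/-- Given an assignment `comp` of the strands of a braid to the components of its closure,
`strandCount comp i` is the number `b(C_i, β)` of strands belonging to the `i`-th component. -/
def strandCount {r m : ℕ} (comp : Fin r → Fin m) (i : Fin m) : ℕ :=
  (Finset.univ.filter fun s => comp s = i).card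

def InsertionLE {M α : Type*} [Monoid M] [Preorder α] (f : M → α) (x y : M) : Prop :=
  ∀ γ δ : M, f (γ * x * δ) ≤ f (γ * y * δ)

namespace InsertionLE

variable {M α : Type*} [Monoid M] [Preorder α] {f : M → α} {x y x' y' : M}

theorem refl (x : M) : InsertionLE f x x := fun _ _ => le_rfl

theorem mul (h : InsertionLE f x y) (h' : InsertionLE f x' y') :
    InsertionLE f (x * x') (y * y') := fun γ δ => by
  have h₁ := h γ (x' * δ)
  have h₂ := h' (γ * y) δ
  simp only [mul_assoc] at h₁ h₂ ⊢
  exact h₁.trans h₂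

theorem apply_le (h : InsertionLE f x y) : f x ≤ f y := by
  simpa using h 1 1

theorem one_le_pow_of_one_le (h : InsertionLE f 1 x) : ∀ n : ℕ, InsertionLE f 1 (x ^ n)
  | 0 => by simpa using refl (f := f) 1
  | n + 1 => by simpa [pow_succ] using (one_le_pow_of_one_le h n).mul h

theorem pow_le_pow_right (h : InsertionLE f 1 x) {m n : ℕ} (hmn : m ≤ n) :
    InsertionLE f (x ^ m) (x ^ n) := by
  obtain ⟨k, rfl⟩ := Nat.exists_eq_add_of_le hmn
  simpa [pow_add] using (refl (x ^ m)).mul (one_le_pow_of_one_le h k)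

end InsertionLE

theorem IsPositiveBraid.mul {n : ℕ} {β γ : BraidGroup n} (hβ : IsPositiveBraid β)
    (hγ : IsPositiveBraid γ) : IsPositiveBraid (β * γ) :=
  Submonoid.mul_mem _ hβ hγ

theorem isPositiveBraid_braidGen_pow {n : ℕ} (i : Fin (n - 1)) (k : ℕ) :
    IsPositiveBraid (braidGen i ^ k) :=
  Submonoid.pow_mem _ (Submonoid.subset_closure (Set.mem_range_self i)) k

namespace BraidGroup

open Multiplicative

local notation "σ₁" => braidGen (n := 3) (0 : Fin (3 - 1))
local notation "σ₂" => braidGen (n := 3) (1 : Fin (3 - 1))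

theorem braidGen_braid_rel {n : ℕ} (i j : Fin (n - 1)) (hij : (i : ℕ) + 1 = j) :
    braidGen i * braidGen j * braidGen i =
      (braidGen j * braidGen i * braidGen j : BraidGroup n) := by
  have h := PresentedGroup.one_of_mem (rels := braidRels n) (Or.inr ⟨i, j, hij, rfl⟩)
  simp only [map_mul, map_inv] at h
  change braidGen i * braidGen j * braidGen i * (braidGen j)⁻¹ * (braidGen i)⁻¹ *
    (braidGen j)⁻¹ = 1 at h
  rw [← mul_inv_eq_one]
  simpa only [mul_inv_rev, mul_assoc] using h

theorem fullTwist_three : fullTwist 3 = σ₁ * σ₂ ^ 2 * σ₁ * σ₂ ^ 2 := by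
  have h : fullTwist 3 = σ₁ * σ₂ * (σ₁ * σ₂ * σ₁) * σ₂ := by
    simp only [fullTwist, pow_succ, pow_zero, one_mul, mul_assoc]
    rfl
  rw [h, braidGen_braid_rel 0 1 rfl]
  simp only [pow_two, mul_assoc]

theorem braidGen_eq_σ₁_or_σ₂ (i : Fin (3 - 1)) : braidGen i = σ₁ ∨ braidGen i = σ₂ := by
  fin_cases i <;> simp

def liftThree {G : Type*} [Group G] (a b : G) (h : a * b * a = b * a * b) :
    BraidGroup 3 →* G :=
  PresentedGroup.toGroup (f := ![a, b]) <| by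
    rintro r (⟨i, j, hij, rfl⟩ | ⟨i, j, hij, rfl⟩) <;> fin_cases i <;> fin_cases j <;>
      simp at hij ⊢
    simpa [mul_assoc] using mul_inv_eq_one.mpr h

section liftThree

variable {G : Type*} [Group G] (a b : G) (h : a * b * a = b * a * b)

@[simp]
theorem liftThree_σ₁ : liftThree a b h σ₁ = a := PresentedGroup.toGroup.of _

@[simp]
theorem liftThree_σ₂ : liftThree a b h σ₂ = b := PresentedGroup.toGroup.of _

end liftThree

def expSum : BraidGroup 3 →* Multiplicative ℤ := liftThree (ofAdd 1) (ofAdd 1) rfl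

@[simp]
theorem expSum_braidGen (i : Fin (3 - 1)) : expSum (braidGen i) = ofAdd 1 := by
  rcases braidGen_eq_σ₁_or_σ₂ i with h | h <;> simp [h, expSum]

theorem expSum_fullTwist : expSum (fullTwist 3) = ofAdd 6 := by
  simp [fullTwist_three, ← ofAdd_nsmul, ← ofAdd_add]

def sixSyllable (a b c d e f : ℕ) : BraidGroup 3 :=
  σ₁ ^ a * σ₂ ^ b * σ₁ ^ c * σ₂ ^ d * σ₁ ^ e * σ₂ ^ f

theorem isPositiveBraid_sixSyllable (a b c d e f : ℕ) :
    IsPositiveBraid (sixSyllable a b c d e f) :=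
  (((((isPositiveBraid_braidGen_pow 0 a).mul (isPositiveBraid_braidGen_pow 1 b)).mul
    (isPositiveBraid_braidGen_pow 0 c)).mul (isPositiveBraid_braidGen_pow 1 d)).mul
    (isPositiveBraid_braidGen_pow 0 e)).mul (isPositiveBraid_braidGen_pow 1 f)

theorem toAdd_expSum_sixSyllable (a b c d e f : ℕ) :
    toAdd (expSum (sixSyllable a b c d e f)) = a + b + c + d + e + f := by
  simp [sixSyllable, ← ofAdd_nsmul]

section InsertionMonotone

variable {φ : BraidGroup 3 → ℝ}

theorem fullTwist_insertionLE (hσ : ∀ i, InsertionLE φ 1 (braidGen i)) :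
    InsertionLE φ (fullTwist 3) ((σ₁ ^ 2 * σ₂ ^ 2) ^ 2) := by
  have h₁ : InsertionLE φ σ₁ (σ₁ ^ 2) := by
    simpa using (hσ 0).pow_le_pow_right (m := 1) (n := 2) (by norm_num)
  rw [fullTwist_three, sq (σ₁ ^ 2 * σ₂ ^ 2), ← mul_assoc]
  exact ((h₁.mul (.refl _)).mul h₁).mul (.refl _)

theorem sixSyllable_insertionLE (hσ : ∀ i, InsertionLE φ 1 (braidGen i))
    {a b c d e f a' b' c' d' e' f' : ℕ}
    (ha : a ≤ a') (hb : b ≤ b') (hc : c ≤ c') (hd : d ≤ d') (he : e ≤ e') (hf : f ≤ f') :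
    InsertionLE φ (sixSyllable a b c d e f) (sixSyllable a' b' c' d' e' f') :=
  (((((hσ 0).pow_le_pow_right ha).mul ((hσ 1).pow_le_pow_right hb)).mul
    ((hσ 0).pow_le_pow_right hc)).mul ((hσ 1).pow_le_pow_right hd)).mul
    ((hσ 0).pow_le_pow_right he) |>.mul ((hσ 1).pow_le_pow_right hf)

theorem three_halves_le_apply_sixSyllable (hΔ : φ (fullTwist 3) = 1)
    (hpow : ∀ (γ : BraidGroup 3) (k : ℕ), φ (γ ^ k) = k * φ γ)
    (hσ : ∀ i, InsertionLE φ 1 (braidGen i)) {a b c d e f : ℕ}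
    (ha : 2 ≤ a) (hb : 2 ≤ b) (hc : 2 ≤ c) (hd : 2 ≤ d) (he : 2 ≤ e) (hf : 2 ≤ f) :
    3 / 2 ≤ φ (sixSyllable a b c d e f) := by
  have hcube : sixSyllable 2 2 2 2 2 2 = (σ₁ ^ 2 * σ₂ ^ 2) ^ 3 := by
    simp only [sixSyllable, pow_three, ← mul_assoc]
  have h₂ := (fullTwist_insertionLE hσ).apply_le
  have h₃ := (sixSyllable_insertionLE hσ ha hb hc hd he hf).apply_le
  rw [hΔ, hpow] at h₂
  rw [hcube, hpow] at h₃
  push_cast at h₂ h₃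
  linarith

end InsertionMonotone

end BraidGroup

namespace Monoid.CoprodI.Word

variable {ι : Type*} {M : ι → Type*} [∀ i, Monoid (M i)]

def countIdx (p : ι → Bool) (w : Word M) : ℕ := w.toList.countP fun l => p l.1

variable (p : ι → Bool)

@[simp]
theorem countIdx_cons {i : ι} (m : M i) (w : Word M) (hmw : w.fstIdx ≠ some i) (h1 : m ≠ 1) :
    countIdx p (cons m w hmw h1) = countIdx p w + if p i then 1 else 0 := by
  simp [countIdx, cons, List.countP_cons]

variable [∀ i, DecidableEq (M i)]

theorem countIdx_tail_le_rcons {i : ι} (q : Pair M i) :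
    countIdx p q.tail ≤ countIdx p (rcons q) := by
  unfold rcons
  split
  · exact le_rfl
  · simp

theorem countIdx_rcons_le {i : ι} (q : Pair M i) :
    countIdx p (rcons q) ≤ countIdx p q.tail + if p i then 1 else 0 := by
  unfold rcons
  split
  · exact Nat.le_add_right _ _
  · simp

variable [DecidableEq ι]

theorem countIdx_of_smul_le {i : ι} (m : M i) (w : Word M) :
    countIdx p (of m • w) ≤ countIdx p w + if p i then 1 else 0 := by
  have hw : rcons (equivPair i w) = w := by
    rw [← equivPair_symm, Equiv.symm_apply_apply]
  rw [of_smul_def]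
  refine (countIdx_rcons_le p _).trans (Nat.add_le_add_right ?_ _)
  conv_rhs => rw [← hw]
  exact countIdx_tail_le_rcons p (equivPair i w)

theorem equiv_mul (g h : CoprodI M) : equiv (M := M) (g * h) = g • equiv h :=
  mul_smul g h (empty : Word M)

theorem equiv_of_mul {i : ι} {m : M i} (g : CoprodI M) (hg : (equiv g).fstIdx ≠ some i)
    (hm : m ≠ 1) : equiv (of m * g) = cons m (equiv g) hg hm := by
  rw [equiv_mul, cons_eq_smul]

end Monoid.CoprodI.Word

abbrev Z2Z3Factor (b : Bool) : Type := Multiplicative (ZMod (cond b 3 2))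

abbrev Z2Z3 : Type := Monoid.CoprodI Z2Z3Factor

namespace Z2Z3

open Monoid.CoprodI Multiplicative BraidGroup

local notation "σ₁" => braidGen (n := 3) (0 : Fin (3 - 1))
local notation "σ₂" => braidGen (n := 3) (1 : Fin (3 - 1))

def x : Z2Z3 := of (i := false) (ofAdd 1)

def y (k : ZMod 3) : Z2Z3 := of (i := true) (ofAdd k)

theorem x_mul_x : x * x = 1 := by
  rw [x, ← map_mul, ← ofAdd_add]
  exact map_one _

theorem x_mul_x_mul (g : Z2Z3) : x * (x * g) = g := by
  rw [← mul_assoc, x_mul_x, one_mul]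

theorem y_mul_y (k l : ZMod 3) : y k * y l = y (k + l) := by
  rw [y, y, y, ← map_mul, ← ofAdd_add]

theorem y_mul_y_mul (k l : ZMod 3) (g : Z2Z3) : y k * (y l * g) = y (k + l) * g := by
  rw [← mul_assoc, y_mul_y]

theorem y_three : y (1 + 1 + 1) = 1 := map_one _

def yCount (g : Z2Z3) : ℕ := Word.countIdx id (Word.equiv g)

theorem yCount_x_mul_le (g : Z2Z3) : yCount (x * g) ≤ yCount g := by
  have h := Word.countIdx_of_smul_le id (M := Z2Z3Factor) (i := false) (ofAdd 1) (Word.equiv g)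
  unfold yCount
  rw [x, Word.equiv_mul]
  simpa only [id, Bool.false_eq_true, if_false, add_zero] using h

theorem yCount_y_mul_le (k : ZMod 3) (g : Z2Z3) : yCount (y k * g) ≤ yCount g + 1 := by
  have h := Word.countIdx_of_smul_le id (M := Z2Z3Factor) (i := true) (ofAdd k) (Word.equiv g)
  unfold yCount
  rw [y, Word.equiv_mul]
  simpa only [id, if_true] using h

def yxProd (K : List (ZMod 3)) : Z2Z3 := (K.map fun k => y k * x).prod

@[simp]
theorem yxProd_cons (k : ZMod 3) (K : List (ZMod 3)) : yxProd (k :: K) = y k * x * yxProd K :=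
  List.prod_cons

@[simp]
theorem yxProd_append (K L : List (ZMod 3)) : yxProd (K ++ L) = yxProd K * yxProd L := by
  simp [yxProd]

@[simp]
theorem yxProd_replicate (n : ℕ) (k : ZMod 3) : yxProd (List.replicate n k) = (y k * x) ^ n := by
  simp [yxProd]

theorem fstIdx_equiv_yxProd_ne_and_yCount_yxProd (K : List (ZMod 3)) (hK : ∀ k ∈ K, k ≠ 0) :
    (Word.equiv (yxProd K)).fstIdx ≠ some false ∧ yCount (yxProd K) = K.length := by
  induction K with
  | nil => exact ⟨by simp [yxProd, Word.equiv, Word.fstIdx],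
      by simp [yCount, yxProd, Word.equiv, Word.countIdx]⟩
  | cons k K ih =>
    obtain ⟨hfst, hcount⟩ := ih fun l hl => hK l (List.mem_cons_of_mem k hl)
    have hx : Word.equiv (x * yxProd K) =
        Word.cons (M := Z2Z3Factor) (i := false) (ofAdd 1) _ hfst (by decide) :=
      Word.equiv_of_mul _ hfst _
    have hfst' : (Word.equiv (x * yxProd K)).fstIdx ≠ some true := by simp [hx]
    have hy : Word.equiv (y k * (x * yxProd K)) =
        Word.cons (M := Z2Z3Factor) (i := true) (ofAdd k) _ hfst'
          (ofAdd_eq_one.not.mpr (hK k List.mem_cons_self)) :=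
      Word.equiv_of_mul _ hfst' _
    rw [yxProd_cons, mul_assoc]
    refine ⟨by simp [hy], ?_⟩
    simp only [yCount, hy, Word.countIdx_cons, hx] at hcount ⊢
    simp [hcount]

theorem yCount_x_mul_yxProd (K : List (ZMod 3)) (hK : ∀ k ∈ K, k ≠ 0) :
    yCount (x * yxProd K) = K.length := by
  obtain ⟨hfst, hcount⟩ := fstIdx_equiv_yxProd_ne_and_yCount_yxProd K hK
  rw [yCount, x, Word.equiv_of_mul (M := Z2Z3Factor) (i := false) (m := ofAdd 1) _ hfst (by decide)]
  simpa [yCount] using hcount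

def ofBraid : BraidGroup 3 →* Z2Z3 :=
  liftThree (x * y 1) (y 1 * x) <| by
    simp only [mul_assoc, x_mul_x_mul, y_mul_y_mul, y_mul_y, y_three, mul_one, one_mul]

theorem ofBraid_fullTwist : ofBraid (fullTwist 3) = 1 := by
  simp only [fullTwist_three, ofBraid, map_mul, liftThree_σ₁, liftThree_σ₂, pow_two,
    mul_assoc, x_mul_x_mul, y_mul_y_mul, ← add_assoc, y_three, one_mul, x_mul_x]

theorem ofBraid_σ₁_pow (n : ℕ) : ofBraid (σ₁ ^ n) = x * (y 1 * x) ^ n * x := by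
  have hx : x⁻¹ = x := inv_eq_of_mul_eq_one_right x_mul_x
  have h : x * y 1 = x * (y 1 * x) * x⁻¹ := by group
  rw [map_pow, ofBraid, liftThree_σ₁, h, conj_pow, hx]

theorem ofBraid_σ₂_pow (n : ℕ) : ofBraid (σ₂ ^ n) = (y 1 * x) ^ n := by
  rw [map_pow, ofBraid, liftThree_σ₂]

theorem ofBraid_sixSyllable (a b c d e f : ℕ) :
    ofBraid (sixSyllable (a + 2) (b + 2) (c + 2) (d + 2) (e + 2) (f + 2)) =
      x * yxProd (List.replicate (a + 1) 1 ++ 2 :: (List.replicate b 1 ++ 2 ::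
        (List.replicate c 1 ++ 2 :: (List.replicate d 1 ++ 2 :: (List.replicate e 1 ++
        2 :: List.replicate (f + 1) 1))))) := by
  have junction : y 1 * x * x * (y 1 * x) = y 2 * x := by
    rw [mul_assoc (y 1), x_mul_x, mul_one, ← mul_assoc, y_mul_y]
    rfl
  simp only [sixSyllable, map_mul, ofBraid_σ₁_pow, ofBraid_σ₂_pow, yxProd_append, yxProd_cons,
    yxProd_replicate]
  rw [← junction]
  generalize y 1 * x = u
  group

theorem yCount_ofBraid_sixSyllable (a b c d e f : ℕ) :
    yCount (ofBraid (sixSyllable (a + 2) (b + 2) (c + 2) (d + 2) (e + 2) (f + 2))) =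
      a + b + c + d + e + f + 7 := by
  rw [ofBraid_sixSyllable, yCount_x_mul_yxProd]
  · simp only [List.length_append, List.length_cons, List.length_replicate]
    ring
  · simp only [List.mem_append, List.mem_cons, List.mem_replicate]
    rintro k (⟨-, rfl⟩ | rfl | ⟨-, rfl⟩ | rfl | ⟨-, rfl⟩ | rfl | ⟨-, rfl⟩ | rfl | ⟨-, rfl⟩ | rfl |
      ⟨-, rfl⟩) <;> decide

theorem yCount_ofBraid_le_expSum {p : BraidGroup 3} (hp : IsPositiveBraid p) :
    (yCount (ofBraid p) : ℤ) ≤ toAdd (expSum p) := by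
  induction hp using Submonoid.closure_induction_left with
  | one => simp [yCount, Word.equiv, Word.countIdx]
  | mul_left s hs q _ ih =>
    obtain ⟨i, rfl⟩ := hs
    have hgen : yCount (ofBraid (braidGen i) * ofBraid q) ≤ yCount (ofBraid q) + 1 := by
      rcases braidGen_eq_σ₁_or_σ₂ i with h | h <;>
        simp only [h, ofBraid, liftThree_σ₁, liftThree_σ₂, mul_assoc]
      · exact (yCount_x_mul_le _).trans (yCount_y_mul_le _ _)
      · exact (yCount_y_mul_le _ _).trans (Nat.add_le_add_right (yCount_x_mul_le _) 1)
    simp only [map_mul, expSum_braidGen, toAdd_mul, toAdd_ofAdd]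
    omega

theorem not_containsFullTwists_one_of_expSum_lt {β : BraidGroup 3}
    (h : toAdd (expSum β) < yCount (ofBraid β) + 6) : ¬ ContainsFullTwists 1 β := by
  intro hβ
  have := yCount_ofBraid_le_expSum hβ
  simp only [map_mul, map_zpow, ofBraid_fullTwist, expSum_fullTwist, one_zpow, one_mul,
    toAdd_mul, toAdd_zpow, toAdd_ofAdd, smul_eq_mul] at this
  omega

end Z2Z3

theorem positive_braid_fdtc_gt_one_no_full_twist_general
    (fdtc : BraidGroup 3 → ℝ)
    (hfull : ∀ (N : ℤ) (γ : BraidGroup 3), fdtc (fullTwist 3 ^ N * γ) = (N : ℝ) + fdtc γ)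
    (hpow : ∀ (γ : BraidGroup 3) (k : ℤ), fdtc (γ ^ k) = (k : ℝ) * fdtc γ)
    (hmono : ∀ (γ δ : BraidGroup 3) (i : Fin (3 - 1)),
      fdtc (γ * δ) ≤ fdtc (γ * braidGen i * δ))
    (a b c d e f : ℕ) (ha : 2 ≤ a) (hb : 2 ≤ b) (hc : 2 ≤ c) (hd : 2 ≤ d)
    (he : 2 ≤ e) (hf : 2 ≤ f)
    (β : BraidGroup 3)
    (hβ : β = braidGen (0 : Fin (3 - 1)) ^ a * braidGen (1 : Fin (3 - 1)) ^ b *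
        braidGen (0 : Fin (3 - 1)) ^ c * braidGen (1 : Fin (3 - 1)) ^ d *
        braidGen (0 : Fin (3 - 1)) ^ e * braidGen (1 : Fin (3 - 1)) ^ f) :
    IsPositiveBraid β ∧ 1 < fdtc β ∧ ¬ ContainsFullTwists 1 β := by
  change β = BraidGroup.sixSyllable a b c d e f at hβ
  subst hβ
  refine ⟨BraidGroup.isPositiveBraid_sixSyllable a b c d e f, ?_, ?_⟩
  · have hone : fdtc 1 = 0 := by simpa using hpow 1 0
    have hΔ : fdtc (fullTwist 3) = 1 := by simpa [hone] using hfull 1 1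
    have hσ : ∀ i, InsertionLE fdtc 1 (braidGen i) := fun i γ δ => by simpa using hmono γ δ i
    have := BraidGroup.three_halves_le_apply_sixSyllable hΔ
      (fun γ k => by exact_mod_cast hpow γ k) hσ ha hb hc hd he hf
    linarith
  · obtain ⟨a, rfl⟩ := Nat.exists_eq_add_of_le' ha
    obtain ⟨b, rfl⟩ := Nat.exists_eq_add_of_le' hb
    obtain ⟨c, rfl⟩ := Nat.exists_eq_add_of_le' hc
    obtain ⟨d, rfl⟩ := Nat.exists_eq_add_of_le' hd
    obtain ⟨e, rfl⟩ := Nat.exists_eq_add_of_le' he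
    obtain ⟨f, rfl⟩ := Nat.exists_eq_add_of_le' hf
    apply Z2Z3.not_containsFullTwists_one_of_expSum_lt
    rw [Z2Z3.yCount_ofBraid_sixSyllable, BraidGroup.toAdd_expSum_sixSyllable]
    push_cast
    linarith

/-- For integers `a, b, c, d, e, f ≥ 2` the positive `3`-braid
`β = σ_1^a σ_2^b σ_1^c σ_2^d σ_1^e σ_2^f` has fractional Dehn twist coefficient `c(β) > 1`,
yet `β` does not contain a full twist. -/
theorem positive_braid_fdtc_gt_one_no_full_twist
    (fdtc : BraidGroup 3 → ℝ)
    (hfull : ∀ (N : ℤ) (γ : BraidGroup 3), fdtc (fullTwist 3 ^ N * γ) = (N : ℝ) + fdtc γ)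
    (hconj : ∀ γ δ : BraidGroup 3, fdtc (δ⁻¹ * γ * δ) = fdtc γ)
    (hpow : ∀ (γ : BraidGroup 3) (k : ℤ), fdtc (γ ^ k) = (k : ℝ) * fdtc γ)
    (hmono : ∀ (γ δ : BraidGroup 3) (i : Fin (3 - 1)),
      fdtc (γ * δ) ≤ fdtc (γ * braidGen i * δ))
    (a b c d e f : ℕ) (ha : 2 ≤ a) (hb : 2 ≤ b) (hc : 2 ≤ c) (hd : 2 ≤ d)
    (he : 2 ≤ e) (hf : 2 ≤ f)
    (β : BraidGroup 3)
    (hβ : β = braidGen (0 : Fin (3 - 1)) ^ a * braidGen (1 : Fin (3 - 1)) ^ b *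
        braidGen (0 : Fin (3 - 1)) ^ c * braidGen (1 : Fin (3 - 1)) ^ d *
        braidGen (0 : Fin (3 - 1)) ^ e * braidGen (1 : Fin (3 - 1)) ^ f) :
    IsPositiveBraid β ∧ 1 < fdtc β ∧ ¬ ContainsFullTwists 1 β :=
  positive_braid_fdtc_gt_one_no_full_twist_general fdtc hfull hpow hmono a b c d e f ha hb hc hd he
    hf β hβ
end

section
/- In the braid group B_n, the fractional Dehn twist coefficient of the braid σ_1σ_2⋯σ_{n−1} equals 1/n; consequently, if a positive braid α can be written as a positive word containing all the generators σ_1, …, σ_{n−1}, then c(α) ≥ 1/n > 0. -/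
/-! Since `(σ_1 ⋯ σ_{n-1})^n = Δ²`, homogeneity gives `n · c(σ_1 ⋯ σ_{n-1}) = c(Δ²) = 1`.
A positive word containing every generator contains, as a sub-word, the word listing each
generator once, in the order of first occurrence. Because distant generators commute, any such
product is conjugate to `σ_1 ⋯ σ_{n-1}`, so its coefficient is `1/n`, and inserting the
remaining letters one at a time can only increase `c`. -/

section CoxeterElement

variable {G : Type*} [Group G] {m : ℕ} (g : Fin m → G)

lemma prod_drop_ofFn_eq_mul {k : ℕ} (hk : k < m) :
    ((List.ofFn g).drop k).prod = g ⟨k, hk⟩ * ((List.ofFn g).drop (k + 1)).prod := by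
  rw [← List.cons_getElem_drop_succ (h := by simpa using hk), List.prod_cons, List.getElem_ofFn]

variable {g}

lemma commute_prod_drop_ofFn (hfar : ∀ i j : Fin m, (i : ℕ) + 2 ≤ j → Commute (g i) (g j))
    {i : Fin m} {k : ℕ} (hik : (i : ℕ) + 2 ≤ k) :
    Commute (g i) ((List.ofFn g).drop k).prod := by
  refine Commute.list_prod_right _ _ fun x hx => ?_
  obtain ⟨l, hl, rfl⟩ := List.mem_iff_getElem.mp hx
  rw [List.getElem_drop, List.getElem_ofFn]
  exact hfar _ _ (by simp; omega)

theorem isConj_prod_map_mul_prod_drop_ofFn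
    (hfar : ∀ i j : Fin m, (i : ℕ) + 2 ≤ j → Commute (g i) (g j)) {k : ℕ} (hk : k ≤ m)
    {w : List (Fin m)} (hw : w.Nodup) (hmem : ∀ i, i ∈ w ↔ (i : ℕ) < k) :
    IsConj ((w.map g).prod * ((List.ofFn g).drop k).prod) (List.ofFn g).prod := by
  induction k generalizing w with
  | zero =>
    obtain rfl : w = [] :=
      List.eq_nil_iff_forall_not_mem.mpr fun i hi => by simpa using (hmem i).1 hi
    simpa using IsConj.refl (List.ofFn g).prod
  | succ k ih =>
    -- Write `w = a ++ k :: b`. The letters of `b` are `< k`, so they commute past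
    -- `g (k+1) ⋯ g (m-1)`, and conjugating by `b` moves them to the front.
    set K : Fin m := ⟨k, hk⟩
    obtain ⟨a, b, rfl⟩ := List.append_of_mem ((hmem K).2 k.lt_succ_self)
    have hnd : (K :: (b ++ a)).Nodup :=
      (List.perm_middle.trans (List.perm_append_comm.cons K)).nodup_iff.mp hw
    have hba : ∀ i, i ∈ b ++ a ↔ (i : ℕ) < k := fun i => by
      constructor
      · intro hi
        have hne : (i : ℕ) ≠ k :=
          fun h => (List.nodup_cons.mp hnd).1 ((Fin.ext h : i = K) ▸ hi)
        have := (hmem i).1 (by simp only [List.mem_append, List.mem_cons] at hi ⊢; tauto)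
        omega
      · intro hi
        have := (hmem i).2 (by omega)
        simp only [List.mem_append, List.mem_cons] at this ⊢
        rcases this with h | rfl | h
        · exact Or.inr h
        · exact absurd hi (lt_irrefl k)
        · exact Or.inl h
    have hcomm : Commute (b.map g).prod ((List.ofFn g).drop (k + 1)).prod :=
      Commute.list_prod_left _ _ fun x hx => by
        obtain ⟨i, hi, rfl⟩ := List.mem_map.mp hx
        exact commute_prod_drop_ofFn hfar (by have := (hba i).1 (List.mem_append_left _ hi); omega)
    have hrw : ((a ++ K :: b).map g).prod * ((List.ofFn g).drop (k + 1)).prod =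
        (a.map g).prod * ((List.ofFn g).drop k).prod * (b.map g).prod := by
      simp only [List.map_append, List.map_cons, List.prod_append, List.prod_cons,
        prod_drop_ofFn_eq_mul g (Nat.lt_of_succ_le hk), mul_assoc, hcomm.eq]
      rfl
    rw [hrw]
    refine (isConj_iff.mpr ⟨(b.map g).prod, ?_⟩).trans
      (ih (Nat.le_of_succ_le hk) (List.nodup_cons.mp hnd).2 hba)
    simp only [List.map_append, List.prod_append]
    group

theorem isConj_prod_map_of_nodup_of_forall_mem
    (hfar : ∀ i j : Fin m, (i : ℕ) + 2 ≤ j → Commute (g i) (g j)) {w : List (Fin m)}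
    (hw : w.Nodup) (hall : ∀ i, i ∈ w) : IsConj (w.map g).prod (List.ofFn g).prod := by
  simpa [List.drop_of_length_le] using
    isConj_prod_map_mul_prod_drop_ofFn hfar le_rfl hw fun i => iff_of_true (hall i) i.isLt

end CoxeterElement

theorem apply_mul_prod_map_le_of_sublist {G ι β : Type*} [Monoid G] [Preorder β] {g : ι → G}
    {f : G → β} (hf : ∀ γ δ i, f (γ * δ) ≤ f (γ * g i * δ)) {u w : List ι}
    (h : u.Sublist w) (γ : G) : f (γ * (u.map g).prod) ≤ f (γ * (w.map g).prod) := by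
  induction h generalizing γ with
  | slnil => rfl
  | @cons _ l i _ ih => simpa [mul_assoc] using (ih γ).trans (hf γ (l.map g).prod i)
  | cons_cons i _ ih => simpa [mul_assoc] using ih (γ * g i)

lemma braidGen_commute {n : ℕ} {i j : Fin (n - 1)} (h : (i : ℕ) + 2 ≤ j) :
    Commute (braidGen (n := n) i) (braidGen j) := by
  have := PresentedGroup.one_of_mem (show _ ∈ braidRels n from Or.inl ⟨i, j, h, rfl⟩)
  simp only [map_mul, map_inv] at this
  exact mul_inv_eq_iff_eq_mul.mp (mul_inv_eq_one.mp this)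

lemma natCast_mul_fdtc_prod_ofFn_braidGen {n : ℕ} (fdtc : BraidGroup n → ℝ)
    (hfull : ∀ (N : ℤ) (γ : BraidGroup n), fdtc (fullTwist n ^ N * γ) = (N : ℝ) + fdtc γ)
    (hpow : ∀ (γ : BraidGroup n) (k : ℤ), fdtc (γ ^ k) = (k : ℝ) * fdtc γ) :
    (n : ℝ) * fdtc (List.ofFn fun i : Fin (n - 1) => braidGen i).prod = 1 := by
  have h1 : fdtc 1 = 0 := by simpa using hpow 1 0
  have hfullTwist : fdtc (fullTwist n) = 1 := by simpa [h1] using hfull 1 1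
  rw [← hfullTwist, fullTwist, ← zpow_natCast, hpow, Int.cast_natCast]

/-- In `B_n` the fractional Dehn twist coefficient of `σ_1 σ_2 ⋯ σ_{n-1}`
equals `1/n`; consequently, if a positive braid `α` can be written as a positive word
containing all the generators `σ_1, …, σ_{n-1}`, then `c(α) ≥ 1/n > 0`. -/
theorem fdtc_of_braid_delta_root {n : ℕ} (fdtc : BraidGroup n → ℝ)
    (hfull : ∀ (N : ℤ) (γ : BraidGroup n), fdtc (fullTwist n ^ N * γ) = (N : ℝ) + fdtc γ)
    (hconj : ∀ γ δ : BraidGroup n, fdtc (δ⁻¹ * γ * δ) = fdtc γ)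
    (hpow : ∀ (γ : BraidGroup n) (k : ℤ), fdtc (γ ^ k) = (k : ℝ) * fdtc γ)
    (hmono : ∀ (γ δ : BraidGroup n) (i : Fin (n - 1)),
      fdtc (γ * δ) ≤ fdtc (γ * braidGen i * δ)) :
    fdtc ((List.ofFn fun i : Fin (n - 1) => braidGen i).prod) = 1 / (n : ℝ) ∧
    ∀ α : BraidGroup n,
      (∃ w : List (Fin (n - 1)), α = (w.map braidGen).prod ∧ ∀ i : Fin (n - 1), i ∈ w) →
      1 / (n : ℝ) ≤ fdtc α ∧ 0 < fdtc α := by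
  have hnδ := natCast_mul_fdtc_prod_ofFn_braidGen fdtc hfull hpow
  have hn : (0 : ℝ) < n := (Nat.cast_nonneg n).lt_of_ne' (left_ne_zero_of_mul_eq_one hnδ)
  have hδ := eq_one_div_of_mul_eq_one_right hnδ
  refine ⟨hδ, ?_⟩
  rintro α ⟨w, rfl, hw⟩
  obtain ⟨c, hc⟩ := isConj_iff.mp <| isConj_prod_map_of_nodup_of_forall_mem
    (fun _ _ => braidGen_commute) w.nodup_dedup fun i => List.mem_dedup.mpr (hw i)
  have hdedup : fdtc (w.dedup.map braidGen).prod = 1 / n := by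
    rw [← hδ, ← hc]
    simpa using (hconj (w.dedup.map braidGen).prod c⁻¹).symm
  have hle : 1 / (n : ℝ) ≤ fdtc (w.map braidGen).prod := by
    simpa [hdedup] using apply_mul_prod_map_le_of_sublist hmono w.dedup_sublist 1
  exact ⟨hle, lt_of_lt_of_le (by positivity) hle⟩
end
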